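/- arXiv:1108.4468 — 4 statements merged into one kernel-verified Lean document; each statement's English description precedes it below -/
import Mathlib

section
/- Soundness of symbolic environment transitions: if p has a symbolic environment transition to p' labeled (u, n, A), and σ ⊨ u, σ ⊨ n, σ' ⊨ n, then there is an explicit environment transition (p, σ) ⇝^A (p', σ'). -/
/-! A formalization of the (untimed) CIF subset of the paper:
automata, parallel composition and the synchronizing-action operator,
with explicit, symbolic and linear SOS transition relations. -/

abbrev Var := ℕ
abbrev Val := ℕ
abbrev Loc := ℕ
abbrev Act := ℕ
/-- Actions extended with the silent action τ (`none`). -/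
abbrev ActTau := Option Act
abbrev Valu := Var → Val
/-- State predicates (initialization predicates, invariants, ...). -/
abbrev SPred := Valu → Prop
/-- Reset predicates: `r σ σ'` means `σ'⁺ ∪ σ ⊨ r`. -/
abbrev RPred := Valu → Valu → Prop

def SPred.and (P Q : SPred) : SPred := fun σ => P σ ∧ Q σ
def RPred.and (P Q : RPred) : RPred := fun σ σ' => P σ σ' ∧ Q σ σ'

/-- `x⁺ ∉ FV(r)`: the reset predicate `r` does not depend on the primed value of `x`. -/
def plusFree (r : RPred) (x : Var) : Prop :=
  ∀ σ σ' v, r σ σ' ↔ r σ (Function.update σ' x v)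

/-- Membership of a possibly-silent action in a set of actions (τ is never synchronizing). -/
def memTau (a : ActTau) (A : Set Act) : Prop :=
  match a with
  | some a' => a' ∈ A
  | none => False

structure Automaton where
  V : Set Loc
  init : Loc → SPred
  inv : Loc → SPred
  E : Set (Loc × ActTau × RPred × Loc)
  S : Set Act

/-- `α[v]`: replace the initial-predicate function by `ipred_v(w) ≜ (w ≡ v)`. -/
def Automaton.reinit (α : Automaton) (v : Loc) : Automaton :=
  { α with init := fun w _ => w = v }

/-- CIF compositions: automata, parallel composition, synchronizing-action operator. -/
inductive Comp where
  | atom : Automaton → Comp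
  | par : Comp → Comp → Comp
  | sync : Set Act → Comp → Comp

open Comp

/-- Explicit environment transitions `(p,σ) ⇝^A (p',σ')`. -/
inductive EnvStep : Comp → Valu → Set Act → Comp → Valu → Prop where
  | atom {α : Automaton} {v σ σ'} :
      v ∈ α.V → α.init v σ → α.inv v σ → α.inv v σ' →
      EnvStep (atom α) σ α.S (atom (α.reinit v)) σ'
  | par {p q p' q' σ σ' Ap Aq} :
      EnvStep p σ Ap p' σ' → EnvStep q σ Aq q' σ' →
      EnvStep (par p q) σ (Ap ∪ Aq) (par p' q') σ'
  | sync {p p' σ σ' A A'} :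
      EnvStep p σ A' p' σ' →
      EnvStep (sync A p) σ (A ∪ A') (sync A p') σ'

/-- Explicit action transitions `(p,σ) →^{a,b} (p',σ')`. -/
inductive ActStep : Comp → Valu → ActTau → Prop → Comp → Valu → Prop where
  | atom {α : Automaton} {v v' a r σ σ'} :
      (v, a, r, v') ∈ α.E → α.init v σ → α.inv v σ → α.inv v' σ' →
      r σ σ' → (∀ x, plusFree r x → σ x = σ' x) →
      ActStep (atom α) σ a (memTau a α.S) (atom (α.reinit v')) σ'
  | syncPar {p q p' q' a σ σ'} :
      ActStep p σ a True p' σ' → ActStep q σ a True q' σ' →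
      ActStep (par p q) σ a True (par p' q') σ'
  | interL {p q p' q' a b A σ σ'} :
      ActStep p σ a b p' σ' → EnvStep q σ A q' σ' → ¬ memTau a A →
      ActStep (par p q) σ a b (par p' q') σ'
  | interR {p q p' q' a b A σ σ'} :
      ActStep q σ a b q' σ' → EnvStep p σ A p' σ' → ¬ memTau a A →
      ActStep (par p q) σ a b (par p' q') σ'
  | sync {p p' a b A σ σ'} :
      ActStep p σ a b p' σ' →
      ActStep (sync A p) σ a (b ∨ memTau a A) (sync A p') σ'

/-- Symbolic environment transitions `p ⇝^{u,n,A} p'`. -/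
inductive SymEnv : Comp → SPred → SPred → Set Act → Comp → Prop where
  | atom {α : Automaton} {v} :
      v ∈ α.V →
      SymEnv (atom α) (α.init v) (α.inv v) α.S (atom (α.reinit v))
  | par {p q p' q' up uq np nq Ap Aq} :
      SymEnv p up np Ap p' → SymEnv q uq nq Aq q' →
      SymEnv (par p q) (up.and uq) (np.and nq) (Ap ∪ Aq) (par p' q')
  | sync {p p' u n A A'} :
      SymEnv p u n A' p' →
      SymEnv (sync A p) u n (A ∪ A') (sync A p')

/-- Symbolic action transitions `p →^{a,b,u,n,n',r} p'`. -/
inductive SymAct : Comp → ActTau → Prop → SPred → SPred → SPred → RPred → Comp → Prop where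
  | atom {α : Automaton} {v a r v'} :
      (v, a, r, v') ∈ α.E →
      SymAct (atom α) a (memTau a α.S) (α.init v) (α.inv v) (α.inv v') r
        (atom (α.reinit v'))
  | syncPar {p q p' q' a up uq np nq np' nq' rp rq} :
      SymAct p a True up np np' rp p' → SymAct q a True uq nq nq' rq q' →
      SymAct (par p q) a True (up.and uq) (np.and nq) (np'.and nq') (rp.and rq)
        (par p' q')
  | interL {p q p' q' a b up uq np nq np' r A} :
      SymAct p a b up np np' r p' → SymEnv q uq nq A q' → ¬ memTau a A →
      SymAct (par p q) a b (up.and uq) (np.and nq) (np'.and nq) r (par p' q')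
  | interR {p q p' q' a b up uq np nq nq' r A} :
      SymAct q a b uq nq nq' r q' → SymEnv p up np A p' → ¬ memTau a A →
      SymAct (par p q) a b (up.and uq) (np.and nq) (np.and nq') r (par p' q')
  | sync {p p' a b u n n' r A} :
      SymAct p a b u n n' r p' →
      SymAct (sync A p) a (b ∨ memTau a A) u n n' r (sync A p')

theorem soundness_of_environment_transitions
    (p p' : Comp) (u n : SPred) (A : Set Act) (σ σ' : Valu)
    (h1 : SymEnv p u n A p')
    (h2u : u σ) (h2n : n σ) (h2n' : n σ') :
    EnvStep p σ A p' σ' := by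
  induction h1 generalizing σ σ' with
  | atom hv => exact EnvStep.atom hv h2u h2n h2n'
  | par _ _ ihp ihq =>
      exact EnvStep.par (ihp σ σ' h2u.1 h2n.1 h2n'.1) (ihq σ σ' h2u.2 h2n.2 h2n'.2)
  | sync _ ih => exact EnvStep.sync (ih σ σ' h2u h2n h2n')
end

section
/- Completeness of symbolic environment transitions: if there is an explicit environment transition (p, σ) ⇝^A (p', σ'), then there exist predicates u and n such that p has a symbolic environment transition to p' labeled (u, n, A), with σ ⊨ u, σ ⊨ n, and σ' ⊨ n. -/
open Comp

theorem completeness_of_environment_transitions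
    (p p' : Comp) (A : Set Act) (σ σ' : Valu)
    (h : EnvStep p σ A p' σ') :
    ∃ u n : SPred, SymEnv p u n A p' ∧ u σ ∧ n σ ∧ n σ' := by
  induction h with
  | atom hv hi hn hn' => exact ⟨_, _, SymEnv.atom hv, hi, hn, hn'⟩
  | par _ _ ih1 ih2 =>
    obtain ⟨u1, n1, h1, a1, b1, c1⟩ := ih1
    obtain ⟨u2, n2, h2, a2, b2, c2⟩ := ih2
    exact ⟨_, _, SymEnv.par h1 h2, ⟨a1, a2⟩, ⟨b1, b2⟩, ⟨c1, c2⟩⟩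
  | sync _ ih =>
    obtain ⟨u, n, h1, a1, b1, c1⟩ := ih
    exact ⟨u, n, SymEnv.sync h1, a1, b1, c1⟩
end

section
/- Soundness of leads-to transitions: let p be a composition containing m automata, and let is ∈ locsof(p) (a sequence of m locations, one per automaton of p). If p ⇝ipred fs, p ⇝inv gs, p ⇝sa A, and u = ⋀_{0≤i<#fs} fs.i(is.i), n = ⋀_{0≤i<#gs} gs.i(is.i), then there is a symbolic environment transition p ⇝^{u,n,A} p[is]. -/
open Comp

/-- Number of automata composed in parallel in a composition. -/
def nAut : Comp → ℕ
  | atom _ => 1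
  | par p q => nAut p + nAut q
  | sync _ p => nAut p

/-- Initialization transitions `p ⇝ipred fs`. -/
inductive IpredOf : Comp → List (Loc → SPred) → Prop where
  | atom (α : Automaton) : IpredOf (atom α) [α.init]
  | par {p q fp fq} : IpredOf p fp → IpredOf q fq → IpredOf (par p q) (fp ++ fq)
  | sync {p fs A} : IpredOf p fs → IpredOf (sync A p) fs

/-- Invariant transitions `p ⇝inv gs`. -/
inductive InvOf : Comp → List (Loc → SPred) → Prop where
  | atom (α : Automaton) : InvOf (atom α) [α.inv]
  | par {p q gp gq} : InvOf p gp → InvOf q gq → InvOf (par p q) (gp ++ gq)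
  | sync {p gs A} : InvOf p gs → InvOf (sync A p) gs

/-- Synchronizing-action transitions `p ⇝sa A`. -/
inductive SaOf : Comp → Set Act → Prop where
  | atom (α : Automaton) : SaOf (atom α) α.S
  | par {p q Ap Aq} : SaOf p Ap → SaOf q Aq → SaOf (par p q) (Ap ∪ Aq)
  | sync {p A A'} : SaOf p A' → SaOf (sync A p) (A ∪ A')

/-- Linear action transitions `p ⊨ vs →^{a,r} vs'`; `none` is the wild-card. -/
inductive LinAct : Comp → List (Option Loc) → ActTau → RPred → List (Option Loc) → Prop where
  | atom {α : Automaton} {v a r v'} :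
      (v, a, r, v') ∈ α.E → LinAct (atom α) [some v] a r [some v']
  | interL {p q vs vs' a r A} :
      LinAct p vs a r vs' → SaOf q A → ¬ memTau a A →
      LinAct (par p q) (vs ++ List.replicate (nAut q) none) a r
        (vs' ++ List.replicate (nAut q) none)
  | interR {p q vs vs' a r A} :
      LinAct q vs a r vs' → SaOf p A → ¬ memTau a A →
      LinAct (par p q) (List.replicate (nAut p) none ++ vs) a r
        (List.replicate (nAut p) none ++ vs')
  | syncPar {p q vsp vsq vsp' vsq' a rp rq Ap Aq} :
      LinAct p vsp a rp vsp' → LinAct q vsq a rq vsq' →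
      SaOf p Ap → SaOf q Aq → memTau a Ap → memTau a Aq →
      LinAct (par p q) (vsp ++ vsq) a (rp.and rq) (vsp' ++ vsq')
  | sync {p vs vs' a r A} :
      LinAct p vs a r vs' → LinAct (sync A p) vs a r vs'

/-- `locsof p`: sequences of locations, one per automaton of `p`. -/
def locsof : Comp → Set (List Loc)
  | atom α => {l | ∃ v ∈ α.V, l = [v]}
  | par p q => {l | ∃ lp ∈ locsof p, ∃ lq ∈ locsof q, l = lp ++ lq}
  | sync _ p => locsof p

/-- `p[is]`: re-initialize each automaton of `p` at the corresponding location. -/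
def reinitC : Comp → List Loc → Comp
  | atom α, l => atom (α.reinit l.headI)
  | par p q, l => par (reinitC p (l.take (nAut p))) (reinitC q (l.drop (nAut p)))
  | sync A p, l => sync A (reinitC p l)

/-- `⋀_{0 ≤ i < #fs} fs.i (is.i)` as a state predicate. -/
def bigAnd (fs : List (Loc → SPred)) (is : List Loc) : SPred :=
  fun σ => ∀ P ∈ List.zipWith (fun f v => f v) fs is, P σ

/-- Wild-card sub-sequence relation `vs ⊑ is`. -/
def subW : List (Option Loc) → List Loc → Prop
  | [], _ => True
  | x :: xs, y :: ys => (x = none ∨ x = some y) ∧ subW xs ys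
  | _ :: _, [] => False

/-- Sequence overwriting `vs ▷ is`. -/
def owW : List (Option Loc) → List Loc → List Loc
  | [], ys => ys
  | x :: xs, y :: ys => x.getD y :: owW xs ys
  | _ :: _, [] => []

lemma IpredOf.length_eq {p : Comp} {fs : List (Loc → SPred)} (h : IpredOf p fs) :
    fs.length = nAut p := by
  induction h <;> simp [nAut, *]

lemma InvOf.length_eq {p : Comp} {gs : List (Loc → SPred)} (h : InvOf p gs) :
    gs.length = nAut p := by
  induction h <;> simp [nAut, *]

lemma length_eq_nAut_of_mem_locsof {p : Comp} {is : List Loc} (h : is ∈ locsof p) :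
    is.length = nAut p := by
  induction p generalizing is with
  | atom α =>
    obtain ⟨v, -, rfl⟩ := h
    rfl
  | par p q ihp ihq =>
    obtain ⟨lp, hp, lq, hq, rfl⟩ := h
    simp [nAut, ihp hp, ihq hq]
  | sync A p ih => exact ih h

lemma reinitC_par_append {p q : Comp} {lp lq : List Loc} (h : lp.length = nAut p) :
    reinitC (par p q) (lp ++ lq) = par (reinitC p lp) (reinitC q lq) := by
  simp [reinitC, ← h]

lemma bigAnd_singleton (f : Loc → SPred) (v : Loc) : bigAnd [f] [v] = f v := by
  funext σ
  simp [bigAnd]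

lemma bigAnd_append {fp fq : List (Loc → SPred)} {lp lq : List Loc}
    (h : fp.length = lp.length) :
    bigAnd (fp ++ fq) (lp ++ lq) = (bigAnd fp lp).and (bigAnd fq lq) := by
  funext σ
  simp only [bigAnd, SPred.and, List.zipWith_append h, List.mem_append]
  exact propext ⟨fun hP => ⟨fun P hp => hP P (.inl hp), fun P hq => hP P (.inr hq)⟩,
    fun ⟨hp, hq⟩ P hP => hP.elim (hp P) (hq P)⟩

theorem SymEnv.reinitC_of_mem_locsof {p : Comp} {is : List Loc} {fs gs : List (Loc → SPred)}
    {A : Set Act} (his : is ∈ locsof p) (hfs : IpredOf p fs) (hgs : InvOf p gs)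
    (hA : SaOf p A) :
    SymEnv p (bigAnd fs is) (bigAnd gs is) A (reinitC p is) := by
  induction p generalizing is fs gs A with
  | atom α =>
    obtain ⟨v, hv, rfl⟩ := his
    cases hfs; cases hgs; cases hA
    rw [bigAnd_singleton, bigAnd_singleton]
    exact SymEnv.atom hv
  | par p q ihp ihq =>
    obtain ⟨lp, hp, lq, hq, rfl⟩ := his
    cases hfs with | par hfp hfq =>
    cases hgs with | par hgp hgq =>
    cases hA with | par hAp hAq =>
    have hlp := length_eq_nAut_of_mem_locsof hp
    rw [bigAnd_append (hfp.length_eq.trans hlp.symm),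
      bigAnd_append (hgp.length_eq.trans hlp.symm), reinitC_par_append hlp]
    exact .par (ihp hp hfp hgp hAp) (ihq hq hfq hgq hAq)
  | sync A' p ih =>
    cases hfs with | sync hf =>
    cases hgs with | sync hg =>
    cases hA with | sync hA =>
    exact .sync (ih his hf hg hA)

theorem soundness_of_leads_to_transitions
    (p : Comp) (is : List Loc) (fs gs : List (Loc → SPred)) (A : Set Act)
    (u n : SPred)
    (h1 : is ∈ locsof p)
    (h2f : IpredOf p fs) (h2g : InvOf p gs) (h2A : SaOf p A)
    (h3u : u = bigAnd fs is) (h3n : n = bigAnd gs is) :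
    SymEnv p u n A (reinitC p is) := by
  subst h3u h3n
  exact .reinitC_of_mem_locsof h1 h2f h2g h2A
end

section
/- Completeness of leads-to transitions: if there is a symbolic environment transition p ⇝^{u,n,A} p', then there exist is ∈ locsof(p), fs, gs with p ⇝ipred fs, p ⇝inv gs, p ⇝sa A, u = ⋀_{0≤i<#fs} fs.i(is.i), n = ⋀_{0≤i<#gs} gs.i(is.i), and p' ≡ p[is]. -/
open Comp

/-! Induction on the symbolic environment transition: each of its rules is mirrored by the
corresponding rules of `⇝ipred`, `⇝inv`, `⇝sa` and `locsof`. In the parallel case the location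
sequence of the left component has exactly `nAut p` entries, as do its lists of predicates, so
the big conjunction over the concatenated lists splits into the two conjunctions and `p[is]`
splits at the right position. -/

lemma length_of_mem_locsof {p : Comp} {l : List Loc} (h : l ∈ locsof p) :
    l.length = nAut p := by
  induction p generalizing l with
  | atom α => obtain ⟨v, _, rfl⟩ := h; rfl
  | par p q ihp ihq =>
      obtain ⟨lp, hp, lq, hq, rfl⟩ := h
      simp [nAut, ihp hp, ihq hq]
  | sync A p ih => exact ih h

lemma bigAnd_append_s16 {fs fs' : List (Loc → SPred)} {is is' : List Loc}
    (h : fs.length = is.length) :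
    bigAnd (fs ++ fs') (is ++ is') = (bigAnd fs is).and (bigAnd fs' is') := by
  funext σ
  simp [bigAnd, SPred.and, List.zipWith_append h, or_imp, forall_and]

theorem completeness_of_leads_to_transitions
    (p p' : Comp) (u n : SPred) (A : Set Act)
    (h : SymEnv p u n A p') :
    ∃ (is : List Loc) (fs gs : List (Loc → SPred)),
      is ∈ locsof p ∧
      IpredOf p fs ∧ InvOf p gs ∧ SaOf p A ∧
      u = bigAnd fs is ∧ n = bigAnd gs is ∧
      p' = reinitC p is := by
  induction h with
  | @atom α v hv =>
      exact ⟨[v], [α.init], [α.inv], ⟨v, hv, rfl⟩, .atom α, .atom α, .atom α,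
        (bigAnd_singleton _ _).symm, (bigAnd_singleton _ _).symm, rfl⟩
  | par _ _ ihp ihq =>
      obtain ⟨ip, fp, gp, hip, hfp, hgp, hsp, rfl, rfl, rfl⟩ := ihp
      obtain ⟨iq, fq, gq, hiq, hfq, hgq, hsq, rfl, rfl, rfl⟩ := ihq
      have hlen : ip.length = _ := length_of_mem_locsof hip
      refine ⟨ip ++ iq, fp ++ fq, gp ++ gq, ⟨ip, hip, iq, hiq, rfl⟩,
        hfp.par hfq, hgp.par hgq, hsp.par hsq, ?_, ?_, (reinitC_par_append hlen).symm⟩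
      · exact (bigAnd_append_s16 (hfp.length_eq.trans hlen.symm)).symm
      · exact (bigAnd_append_s16 (hgp.length_eq.trans hlen.symm)).symm
  | sync _ ih =>
      obtain ⟨is, fs, gs, hi, hf, hg, hs, hu, hn, rfl⟩ := ih
      exact ⟨is, fs, gs, hi, hf.sync, hg.sync, hs.sync, hu, hn, rfl⟩
end
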